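/- A rational point T ∈ C(ℚ) on the Pell conic satisfies h(T) = 0 if and only if T is a torsion point of the group C(ℚ). -/

import Mathlib

open Filter Real

/-- The defining equation of the Pell conic `X² - ΔY² = 4`. -/
def PellSol (Δ : ℚ) (P : ℚ × ℚ) : Prop := P.1 ^ 2 - Δ * P.2 ^ 2 = 4

/-- The rational points on the Pell conic `X² - ΔY² = 4`. -/
def Conic (Δ : ℚ) : Type := {P : ℚ × ℚ // PellSol Δ P}

namespace Conic

variable {Δ : ℚ}

/-- Addition on the Pell conic. -/
instance : Add (Conic Δ) :=
  ⟨fun P Q => ⟨((P.val.1 * Q.val.1 + Δ * P.val.2 * Q.val.2) / 2,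
    (P.val.1 * Q.val.2 + P.val.2 * Q.val.1) / 2), by
      have hP := P.property
      have hQ := Q.property
      unfold PellSol at *
      dsimp only
      linear_combination ((Q.val.1 ^ 2 - Δ * Q.val.2 ^ 2) / 4) * hP + hQ⟩⟩

/-- The neutral element `(2,0)` of the Pell conic. -/
instance : Zero (Conic Δ) := ⟨⟨(2, 0), by unfold PellSol; norm_num⟩⟩

/-- The negative of a point on the Pell conic. -/
instance : Neg (Conic Δ) :=
  ⟨fun P => ⟨(P.val.1, -P.val.2), by
    have hP := P.property
    unfold PellSol at *
    dsimp only
    linear_combination hP⟩⟩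

@[simp] lemma add_val (P Q : Conic Δ) :
    (P + Q).val = ((P.val.1 * Q.val.1 + Δ * P.val.2 * Q.val.2) / 2,
      (P.val.1 * Q.val.2 + P.val.2 * Q.val.1) / 2) := rfl

@[simp] lemma zero_val : ((0 : Conic Δ)).val = (2, 0) := rfl

@[simp] lemma neg_val (P : Conic Δ) : (-P).val = (P.val.1, -P.val.2) := rfl

protected lemma add_assoc' (P Q R : Conic Δ) : P + Q + R = P + (Q + R) := by
  apply Subtype.ext
  rw [Prod.ext_iff, add_val, add_val, add_val, add_val]
  constructor <;> (dsimp only; ring)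

protected lemma zero_add' (P : Conic Δ) : 0 + P = P := by
  apply Subtype.ext
  rw [Prod.ext_iff, add_val, zero_val]
  constructor <;> (dsimp only; ring)

protected lemma add_zero' (P : Conic Δ) : P + 0 = P := by
  apply Subtype.ext
  rw [Prod.ext_iff, add_val, zero_val]
  constructor <;> (dsimp only; ring)

protected lemma neg_add_cancel' (P : Conic Δ) : -P + P = 0 := by
  have hP := P.property
  unfold PellSol at hP
  apply Subtype.ext
  rw [Prod.ext_iff, add_val, neg_val, zero_val]
  constructor
  · dsimp only
    linear_combination hP / 2
  · dsimp only; ring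

protected lemma add_comm' (P Q : Conic Δ) : P + Q = Q + P := by
  apply Subtype.ext
  rw [Prod.ext_iff, add_val, add_val]
  constructor <;> (dsimp only; ring)

/-- The group structure on the rational points of the Pell conic. -/
instance : AddCommGroup (Conic Δ) where
  add := (· + ·)
  zero := 0
  neg := Neg.neg
  nsmul := nsmulRec
  zsmul := zsmulRec
  add_assoc := Conic.add_assoc'
  zero_add := Conic.zero_add'
  add_zero := Conic.add_zero'
  neg_add_cancel := Conic.neg_add_cancel'
  add_comm := Conic.add_comm'

end Conic
section Extra

namespace Conic

variable {Δ : ℚ}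

/-- The naive height of a point on a Pell conic: `H(x,y) = max(|num x|, den x)`. -/
noncomputable def height (P : Conic Δ) : ℝ :=
  max (|P.val.1.num| : ℝ) (P.val.1.den : ℝ)

/-- The logarithmic height `h₀(P) = log H(P)`. -/
noncomputable def logHeight (P : Conic Δ) : ℝ := Real.log (height P)

/-- The canonical height `h(P) = lim 2⁻ⁿ h₀(2ⁿ P)`. -/
noncomputable def canHeight (P : Conic Δ) : ℝ :=
  limUnder atTop (fun n : ℕ => logHeight ((2 ^ n) • P) / 2 ^ n)

end Conic

/-- The integral points form a subgroup of the group of rational points on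
the Pell conic `X² - ΔY² = 4` (for an integral `Δ`). -/
def intPoints (Δ : ℤ) : AddSubgroup (Conic (Δ : ℚ)) where
  carrier := {P | ∃ a b : ℤ, P.val = ((a : ℚ), (b : ℚ))}
  zero_mem' := ⟨2, 0, by rw [Conic.zero_val]; norm_num⟩
  neg_mem' := by
    rintro P ⟨a, b, h⟩
    exact ⟨a, -b, by rw [Conic.neg_val, h]; push_cast; rfl⟩
  add_mem' := by
    rintro P Q ⟨a, b, hP⟩ ⟨c, e, hQ⟩
    have hPp := P.property
    have hQp := Q.property
    unfold PellSol at hPp hQp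
    rw [hP] at hPp
    rw [hQ] at hQp
    dsimp only at hPp hQp
    have ha : a ^ 2 - Δ * b ^ 2 = 4 := by exact_mod_cast hPp
    have hc : c ^ 2 - Δ * e ^ 2 = 4 := by exact_mod_cast hQp
    have key : ∀ A B C E F : ZMod 2, A ^ 2 - F * B ^ 2 = 4 → C ^ 2 - F * E ^ 2 = 4 →
        (A * C + F * B * E = 0 ∧ A * E + B * C = 0) := by decide
    have ha2 : (a : ZMod 2) ^ 2 - (Δ : ZMod 2) * (b : ZMod 2) ^ 2 = 4 := by
      have := congrArg (fun z : ℤ => (z : ZMod 2)) ha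
      push_cast at this
      exact_mod_cast this
    have hc2 : (c : ZMod 2) ^ 2 - (Δ : ZMod 2) * (e : ZMod 2) ^ 2 = 4 := by
      have := congrArg (fun z : ℤ => (z : ZMod 2)) hc
      push_cast at this
      exact_mod_cast this
    obtain ⟨k1, k2⟩ := key (a : ZMod 2) (b : ZMod 2) (c : ZMod 2) (e : ZMod 2) (Δ : ZMod 2) ha2 hc2
    have d1 : (2 : ℤ) ∣ (a * c + Δ * b * e) := by
      have : ((a * c + Δ * b * e : ℤ) : ZMod 2) = 0 := by push_cast; linear_combination k1
      exact_mod_cast (ZMod.intCast_zmod_eq_zero_iff_dvd _ 2).mp this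
    have d2 : (2 : ℤ) ∣ (a * e + b * c) := by
      have : ((a * e + b * c : ℤ) : ZMod 2) = 0 := by push_cast; linear_combination k2
      exact_mod_cast (ZMod.intCast_zmod_eq_zero_iff_dvd _ 2).mp this
    obtain ⟨X, hX⟩ := d1
    obtain ⟨Y, hY⟩ := d2
    refine ⟨X, Y, ?_⟩
    rw [Conic.add_val, hP, hQ]
    have hX' : ((a : ℚ) * c + Δ * b * e) = 2 * X := by exact_mod_cast congrArg (fun z : ℤ => (z : ℚ)) hX
    have hY' : ((a : ℚ) * e + b * c) = 2 * Y := by exact_mod_cast congrArg (fun z : ℤ => (z : ℚ)) hY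
    rw [Prod.ext_iff]
    constructor
    · dsimp only
      rw [div_eq_iff (by norm_num : (2:ℚ) ≠ 0)]
      linarith [hX']
    · dsimp only
      rw [div_eq_iff (by norm_num : (2:ℚ) ≠ 0)]
      linarith [hY']

end Extra

section Aux

open Conic

variable {Δ : ℚ}

lemma double_val (P : Conic Δ) :
    ((2 : ℕ) • P).val = (P.val.1 ^ 2 - 2, P.val.1 * P.val.2) := by
  have hP := P.property
  unfold PellSol at hP
  rw [two_nsmul, Conic.add_val, Prod.ext_iff]
  constructor
  · dsimp only
    rw [div_eq_iff (by norm_num : (2:ℚ) ≠ 0)]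
    linear_combination -hP
  · dsimp only
    rw [div_eq_iff (by norm_num : (2:ℚ) ≠ 0)]
    ring

lemma num_sq_sub_two (x : ℚ) :
    (x ^ 2 - 2).num = x.num ^ 2 - 2 * (x.den : ℤ) ^ 2 ∧
      ((x ^ 2 - 2).den : ℤ) = (x.den : ℤ) ^ 2 := by
  have hb : (0:ℤ) < (x.den : ℤ) ^ 2 := by positivity
  have hcop0 : IsCoprime (x.num) ((x.den : ℤ)) := by
    rw [Int.isCoprime_iff_gcd_eq_one]
    exact x.reduced
  have hcop : Nat.Coprime (x.num ^ 2 - 2 * (x.den : ℤ) ^ 2).natAbs ((x.den : ℤ) ^ 2).natAbs := by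
    have h2 : IsCoprime (x.num ^ 2) ((x.den : ℤ) ^ 2) :=
      hcop0.pow
    have h3 : IsCoprime (x.num ^ 2 + ((x.den : ℤ) ^ 2) * (-2)) ((x.den : ℤ) ^ 2) :=
      h2.add_mul_left_left (-2)
    rw [Int.isCoprime_iff_gcd_eq_one] at h3
    rw [Nat.Coprime, ← Int.gcd]
    convert h3 using 2
    ring
  have hx : x ^ 2 - 2 = ((x.num ^ 2 - 2 * (x.den : ℤ) ^ 2 : ℤ) : ℚ) / (((x.den : ℤ) ^ 2 : ℤ) : ℚ) := by
    have hd : ((x.den : ℚ)) ≠ 0 := (Nat.cast_ne_zero (R := ℚ)).mpr x.den_nz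
    have hnum : (x.num : ℚ) = x * (x.den : ℚ) := (Rat.mul_den_eq_num x).symm
    rw [eq_div_iff (by positivity : (((x.den : ℤ) ^ 2 : ℤ) : ℚ) ≠ 0)]
    push_cast
    linear_combination (-((x.num : ℚ) + x * (x.den : ℚ))) * hnum
  constructor
  · rw [hx]; exact Rat.num_div_eq_of_coprime hb hcop
  · rw [hx]; exact Rat.den_div_eq_of_coprime hb hcop

end Aux

open Conic in
lemma one_le_height {Δ : ℚ} (P : Conic Δ) : 1 ≤ Conic.height P := by
  unfold Conic.height
  have : (1:ℝ) ≤ (P.val.1.den : ℝ) := by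
    exact_mod_cast Nat.one_le_iff_ne_zero.mpr P.val.1.den_nz
  exact le_trans this (le_max_right _ _)

open Conic in
lemma logHeight_nonneg {Δ : ℚ} (P : Conic Δ) : 0 ≤ Conic.logHeight P :=
  Real.log_nonneg (one_le_height P)

lemma real_max_bounds (a b : ℝ) (hb : 1 ≤ b) :
    max |a^2-2*b^2| (b^2) ≤ 3 * (max |a| b)^2 ∧ (max |a| b)^2 ≤ 3 * max |a^2-2*b^2| (b^2) := by
  have h1 := le_max_left |a| b
  have h2 := le_max_right |a| b
  have h3 := abs_nonneg a
  have h4 := sq_abs a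
  constructor
  · apply max_le
    · rw [abs_le]
      constructor <;> nlinarith
    · nlinarith
  · have hb2 : b^2 ≤ max |a^2-2*b^2| (b^2) := le_max_right _ _
    have hA : a^2 - 2*b^2 ≤ max |a^2-2*b^2| (b^2) := le_trans (le_abs_self _) (le_max_left _ _)
    rcases max_cases |a| b with ⟨h, _⟩ | ⟨h, _⟩ <;> rw [h] <;> nlinarith

open Conic in
lemma height_double {Δ : ℚ} (P : Conic Δ) :
    Conic.height ((2:ℕ) • P) ≤ 3 * (Conic.height P)^2 ∧
      (Conic.height P)^2 ≤ 3 * Conic.height ((2:ℕ) • P) := by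
  obtain ⟨hnum, hden⟩ := num_sq_sub_two P.val.1
  have hfst : ((2:ℕ) • P).val.1 = P.val.1 ^ 2 - 2 := by rw [double_val]
  have hb : (1:ℝ) ≤ ((P.val.1.den : ℤ) : ℝ) := by
    exact_mod_cast Nat.one_le_iff_ne_zero.mpr P.val.1.den_nz
  have key := real_max_bounds (P.val.1.num : ℝ) ((P.val.1.den : ℤ) : ℝ) hb
  have e0 : Conic.height P = max |(P.val.1.num : ℝ)| ((P.val.1.den : ℤ) : ℝ) := by
    unfold Conic.height
    norm_cast
  have e1 : (|((2:ℕ) • P).val.1.num| : ℝ)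
      = |(P.val.1.num:ℝ)^2 - 2*((P.val.1.den:ℤ):ℝ)^2| := by
    rw [hfst, hnum]
    push_cast
    ring_nf
  have e2 : ((((2:ℕ) • P).val.1.den : ℕ) : ℝ) = ((P.val.1.den:ℤ):ℝ)^2 := by
    rw [hfst]
    have := congrArg (fun z : ℤ => (z : ℝ)) hden
    push_cast at this ⊢
    linarith
  have e3 : Conic.height ((2:ℕ) • P)
      = max |(P.val.1.num:ℝ)^2 - 2*((P.val.1.den:ℤ):ℝ)^2| (((P.val.1.den:ℤ):ℝ)^2) := by
    unfold Conic.height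
    rw [e1, e2]
  rw [e0, e3]
  exact ⟨key.1, key.2⟩

open Conic in
lemma abs_logHeight_double {Δ : ℚ} (P : Conic Δ) :
    |Conic.logHeight ((2:ℕ) • P) - 2 * Conic.logHeight P| ≤ Real.log 3 := by
  have h1 := one_le_height P
  have h2 := one_le_height ((2:ℕ) • P)
  have hp1 : (0:ℝ) < Conic.height P := lt_of_lt_of_le one_pos h1
  have hp2 : (0:ℝ) < Conic.height ((2:ℕ) • P) := lt_of_lt_of_le one_pos h2
  obtain ⟨hu, hl⟩ := height_double P
  unfold Conic.logHeight
  rw [abs_le]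
  constructor
  · have hlog : Real.log ((Conic.height P)^2) ≤ Real.log (3 * Conic.height ((2:ℕ) • P)) :=
      (Real.log_le_log_iff (by positivity) (by positivity)).mpr hl
    rw [Real.log_pow, Real.log_mul (by norm_num) (ne_of_gt hp2)] at hlog
    push_cast at hlog
    linarith
  · have hlog : Real.log (Conic.height ((2:ℕ) • P)) ≤ Real.log (3 * (Conic.height P)^2) :=
      (Real.log_le_log_iff (by positivity) (by positivity)).mpr hu
    rw [Real.log_mul (by norm_num) (by positivity), Real.log_pow] at hlog
    push_cast at hlog
    linarith

open Conic in
lemma step_bound {Δ : ℚ} (P : Conic Δ) (n : ℕ) :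
    |Conic.logHeight ((2^(n+1)) • P) / 2^(n+1) - Conic.logHeight ((2^n) • P) / 2^n|
      ≤ Real.log 3 / 2^(n+1) := by
  have e : (2^(n+1)) • P = (2:ℕ) • ((2^n) • P) := by rw [pow_succ', mul_smul]
  have h := abs_logHeight_double ((2^n) • P)
  rw [e]
  have e2 : Conic.logHeight ((2:ℕ) • ((2^n) • P)) / 2^(n+1)
      - Conic.logHeight ((2^n) • P) / 2^n
      = (Conic.logHeight ((2:ℕ) • ((2^n) • P)) - 2 * Conic.logHeight ((2^n) • P)) / 2^(n+1) := by
    field_simp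
    ring
  rw [e2, abs_div, abs_of_pos (by positivity : (0:ℝ) < (2:ℝ)^(n+1))]
  gcongr

open Conic in
lemma tail_bound {Δ : ℚ} (P : Conic Δ) (n m : ℕ) :
    |Conic.logHeight ((2^(n+m)) • P) / 2^(n+m) - Conic.logHeight ((2^n) • P) / 2^n|
      ≤ Real.log 3 / 2^n - Real.log 3 / 2^(n+m) := by
  induction m with
  | zero => simp
  | succ m ih =>
    have h := step_bound P (n+m)
    have tri := abs_sub_le (Conic.logHeight ((2^(n+m+1)) • P) / 2^(n+m+1))
      (Conic.logHeight ((2^(n+m)) • P) / 2^(n+m)) (Conic.logHeight ((2^n) • P) / 2^n)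
    have e : n + (m+1) = (n+m) + 1 := by ring
    rw [e]
    have h2 : Real.log 3 / 2^(n+m+1) = Real.log 3 / 2^(n+m) / 2 := by
      rw [pow_succ]
      ring
    calc |Conic.logHeight ((2^(n+m+1)) • P) / 2^(n+m+1) - Conic.logHeight ((2^n) • P) / 2^n|
        ≤ _ + _ := tri
      _ ≤ Real.log 3 / 2^(n+m+1) + (Real.log 3 / 2^n - Real.log 3 / 2^(n+m)) := by
          exact add_le_add h ih
      _ ≤ Real.log 3 / 2^n - Real.log 3 / 2^((n+m)+1) := by
          rw [h2]
          have : (0:ℝ) ≤ Real.log 3 / 2^(n+m) := by positivity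
          linarith

open Conic in
lemma canHeight_spec {Δ : ℚ} (P : Conic Δ) :
    ∃ L : ℝ, Filter.Tendsto (fun n : ℕ => Conic.logHeight ((2^n) • P) / 2^n)
        Filter.atTop (nhds L) ∧ Conic.canHeight P = L ∧
      ∀ n : ℕ, |Conic.logHeight ((2^n) • P) / 2^n - L| ≤ Real.log 3 / 2^n := by
  set a : ℕ → ℝ := fun n => Conic.logHeight ((2^n) • P) / 2^n with ha
  have hcau : CauchySeq a := by
    apply cauchySeq_of_le_geometric (1/2 : ℝ) (Real.log 3 / 2) (by norm_num)
    intro n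
    rw [Real.dist_eq]
    have h := step_bound P n
    rw [abs_sub_comm] at h
    calc |a n - a (n+1)| ≤ Real.log 3 / 2^(n+1) := h
      _ = Real.log 3 / 2 * (1/2)^n := by
          rw [pow_succ']
          field_simp
          rw [← mul_pow]; norm_num
  obtain ⟨L, hL⟩ := cauchySeq_tendsto_of_complete hcau
  refine ⟨L, hL, hL.limUnder_eq, fun n => ?_⟩
  have h1 : Filter.Tendsto (fun m : ℕ => a (n+m)) Filter.atTop (nhds L) := by
    have := hL.comp (tendsto_add_atTop_nat n)
    simpa [Function.comp_def, add_comm] using this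
  have htend : Filter.Tendsto (fun m : ℕ => |a (n+m) - a n|) Filter.atTop (nhds |L - a n|) :=
    (h1.sub_const (a n)).abs
  have hle : |L - a n| ≤ Real.log 3 / 2^n := by
    apply le_of_tendsto htend
    filter_upwards with m
    calc |a (n+m) - a n| ≤ Real.log 3 / 2^n - Real.log 3 / 2^(n+m) := tail_bound P n m
      _ ≤ Real.log 3 / 2^n := by
          have : (0:ℝ) ≤ Real.log 3 / 2^(n+m) := by positivity
          linarith
  rwa [abs_sub_comm] at hle

open Conic in
lemma nsmul_mod_addOrder {Δ : ℚ} (T : Conic Δ) {k : ℕ} (hk : k • T = 0) (m : ℕ) :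
    m • T = (m % k) • T := by
  conv_lhs => rw [← Nat.mod_add_div m k]
  rw [add_nsmul, mul_comm, mul_smul, hk, smul_zero, add_zero]

open Conic in
lemma canHeight_of_torsion {Δ : ℚ} (T : Conic Δ) (hT : IsOfFinAddOrder T) :
    Conic.canHeight T = 0 := by
  set k := addOrderOf T with hkdef
  have hk0 : 0 < k := hT.addOrderOf_pos
  have hkT : k • T = 0 := addOrderOf_nsmul_eq_zero T
  have hne : (Finset.range k).Nonempty := ⟨0, Finset.mem_range.mpr hk0⟩
  set C := (Finset.range k).sup' hne (fun j => Conic.logHeight (j • T)) with hC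
  have hbd : ∀ n : ℕ, Conic.logHeight ((2^n) • T) ≤ C := by
    intro n
    rw [nsmul_mod_addOrder T hkT (2^n)]
    exact Finset.le_sup' (fun j => Conic.logHeight (j • T)) (Finset.mem_range.mpr (Nat.mod_lt _ hk0))
  have htend : Filter.Tendsto (fun n : ℕ => Conic.logHeight ((2^n) • T) / 2^n)
      Filter.atTop (nhds 0) := by
    apply squeeze_zero (fun n => div_nonneg (logHeight_nonneg _) (by positivity))
      (g := fun n : ℕ => C * (1/2:ℝ)^n)
    · intro n
      calc Conic.logHeight ((2^n) • T) / 2^n ≤ C / 2^n := by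
            gcongr
            exact hbd n
        _ = C * (1/2:ℝ)^n := by
            rw [one_div, inv_pow, div_eq_mul_inv]
    · have := (tendsto_pow_atTop_nhds_zero_of_lt_one (by norm_num : (0:ℝ) ≤ 1/2)
        (by norm_num : (1/2:ℝ) < 1)).const_mul C
      simpa using this
  exact htend.limUnder_eq


lemma finite_small_rats : {q : ℚ | |q.num| ≤ 3 ∧ q.den ≤ 3}.Finite := by
  apply Set.Finite.of_finite_image (f := fun q : ℚ => (q.num, q.den))
  · apply Set.Finite.subset ((Set.finite_Icc (-3:ℤ) 3).prod (Set.finite_Icc (0:ℕ) 3))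
    rintro ⟨a, b⟩ ⟨q, ⟨h1, h2⟩, heq⟩
    rw [← heq]
    rw [abs_le] at h1
    exact ⟨⟨h1.1, h1.2⟩, ⟨Nat.zero_le _, h2⟩⟩
  · intro q _ q' _ h
    exact Rat.ext (congrArg Prod.fst h) (congrArg Prod.snd h)

open Conic in
lemma torsion_of_x_eq {Δ : ℚ} (hΔ0 : Δ ≠ 0) (T : Conic Δ) {m n : ℕ} (hmn : m < n)
    (hx : ((2^m) • T).val.1 = ((2^n) • T).val.1) : IsOfFinAddOrder T := by
  set Pm := (2^m) • T with hPm
  set Pn := (2^n) • T with hPn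
  have hm := Pm.property
  have hn := Pn.property
  unfold PellSol at hm hn
  have hy2 : Pm.val.2 ^ 2 = Pn.val.2 ^ 2 := by
    have h : Δ * (Pm.val.2 ^ 2 - Pn.val.2 ^ 2) = 0 := by
      linear_combination hn - hm + (Pm.val.1 + Pn.val.1) * hx
    rcases mul_eq_zero.mp h with h | h
    · exact absurd h hΔ0
    · linarith
  have hfac : (Pm.val.2 - Pn.val.2) * (Pm.val.2 + Pn.val.2) = 0 := by
    linear_combination hy2
  have hpowlt : 2^m < 2^n := Nat.pow_lt_pow_right (by norm_num) hmn
  rw [isOfFinAddOrder_iff_nsmul_eq_zero]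
  rcases mul_eq_zero.mp hfac with h | h
  · -- Pm = Pn
    have hPeq : Pm = Pn := Subtype.ext (Prod.ext hx (by linarith))
    refine ⟨2^n - 2^m, Nat.sub_pos_of_lt hpowlt, ?_⟩
    have : (2^n - 2^m) • T + (2^m) • T = (2^m) • T := by
      rw [← add_nsmul, Nat.sub_add_cancel hpowlt.le, ← hPn, ← hPeq]
    exact add_eq_right.mp this
  · -- Pm = -Pn
    have hPeq : Pm = -Pn := Subtype.ext (by
      rw [Conic.neg_val]
      exact Prod.ext hx (by dsimp only; linarith))
    refine ⟨2^n + 2^m, by positivity, ?_⟩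
    rw [add_nsmul, ← hPn, ← hPm, hPeq, add_neg_cancel]

/-- A rational point `T` on the Pell conic satisfies `h(T) = 0`
iff `T` is a torsion point of `C(ℚ)`. -/
theorem canHeight_eq_zero_iff_torsion (d : ℤ) (hsf : Squarefree d) (hd0 : d ≠ 0)
    (hd1 : d ≠ 1) (Δ : ℤ) (hΔ : Δ = if d % 4 = 1 then d else 4 * d)
    (T : Conic (Δ : ℚ)) :
    Conic.canHeight T = 0 ↔ IsOfFinAddOrder T := by
  constructor
  · intro h0
    obtain ⟨L, hL, hCeq, hbd⟩ := canHeight_spec T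
    have hL0 : L = 0 := by rw [← hCeq, h0]
    subst hL0
    have hlog : ∀ n : ℕ, Conic.logHeight ((2^n) • T) ≤ Real.log 3 := by
      intro n
      have hb := hbd n
      rw [sub_zero, abs_of_nonneg (div_nonneg (logHeight_nonneg _) (by positivity))] at hb
      have h2 : (0:ℝ) < 2^n := by positivity
      rw [div_le_div_iff₀ h2 h2] at hb
      nlinarith
    have hht : ∀ n : ℕ, Conic.height ((2^n) • T) ≤ 3 := by
      intro n
      have h1 := one_le_height ((2^n) • T)
      have h2 := hlog n
      unfold Conic.logHeight at h2
      exact (Real.log_le_log_iff (by linarith) (by norm_num)).mp h2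
    have hmem : ∀ n : ℕ, ((2^n) • T).val.1 ∈ {q : ℚ | |q.num| ≤ 3 ∧ q.den ≤ 3} := by
      intro n
      have h3 := hht n
      unfold Conic.height at h3
      rw [max_le_iff] at h3
      constructor
      · exact_mod_cast h3.1
      · exact_mod_cast h3.2
    have hΔ0 : ((Δ:ℤ):ℚ) ≠ 0 := by
      have h4 : Δ ≠ 0 := by
        rw [hΔ]; split <;> simp [hd0]
      exact_mod_cast h4
    obtain ⟨m, -, n, -, hne, heq⟩ := Set.infinite_univ.exists_ne_map_eq_of_mapsTo
      (f := fun n : ℕ => ((2^n) • T).val.1) (fun n _ => hmem n) finite_small_rats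
    rcases hne.lt_or_gt with h | h
    · exact torsion_of_x_eq hΔ0 T h heq
    · exact torsion_of_x_eq hΔ0 T h heq.symm
  · exact canHeight_of_torsion T
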